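/- arXiv:2012.15801 — 4 statements merged into one kernel-verified Lean document; each statement's English description precedes it below -/
import Mathlib

section
/- Let R be a commutative ring, N an R-module, and f, g ∈ R a regular sequence on N (i.e., f is a nonzerodivisor on N and g is a nonzerodivisor on N/fN). Then g, f is a regular sequence on the f-adic completion of N; that is, g is a nonzerodivisor on the f-adic completion N̂ of N, and f is a nonzerodivisor on N̂/gN̂. -/
open Submodule

private lemma memP_aux {R : Type*} [CommRing R] {N : Type*} [AddCommGroup N] [Module R N]
    (f : R) (n : ℕ) (x : N) :
    x ∈ ((Ideal.span {f}) ^ n • ⊤ : Submodule R N) ↔ ∃ y, f ^ n • y = x := by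
  rw [Ideal.span_singleton_pow, Submodule.ideal_span_singleton_smul]
  constructor
  · intro h
    obtain ⟨y, -, hy⟩ := Set.mem_smul_set.mp h
    exact ⟨y, hy⟩
  · rintro ⟨y, rfl⟩
    exact Submodule.smul_mem_pointwise_smul y _ _ mem_top

private lemma memI_aux {R : Type*} [CommRing R] {N : Type*} [AddCommGroup N] [Module R N]
    (f : R) (x : N) :
    x ∈ ((Ideal.span {f}) • ⊤ : Submodule R N) ↔ ∃ y, f • y = x := by
  have := memP_aux f 1 x
  simpa [pow_one] using this

private lemma transitionMap_mk_aux {R : Type*} [CommRing R] {N : Type*} [AddCommGroup N]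
    [Module R N] {I : Ideal R} {m n : ℕ} {hmn : m ≤ n} {x : N} :
    AdicCompletion.transitionMap I N hmn (Submodule.Quotient.mk x) = Submodule.Quotient.mk x :=
  rfl

/-- Let `R` be a commutative ring, `N` an `R`-module, and `f, g ∈ R` a
regular sequence on `N` (i.e. `f` is a nonzerodivisor on `N` and `g` is a nonzerodivisor on
`N/fN`).  Then `g, f` is a regular sequence on the `f`-adic completion `N̂` of `N`: `g` is a
nonzerodivisor on `N̂` and `f` is a nonzerodivisor on `N̂/gN̂`. -/
theorem stmt_0 {R : Type*} [CommRing R] {N : Type*} [AddCommGroup N] [Module R N]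
    (f g : R) (hf : IsSMulRegular N f)
    (hg : IsSMulRegular (N ⧸ (Ideal.span {f} • ⊤ : Submodule R N)) g) :
    IsSMulRegular (AdicCompletion (Ideal.span {f}) N) g ∧
      IsSMulRegular
        ((AdicCompletion (Ideal.span {f}) N) ⧸
          (Ideal.span {g} • ⊤ : Submodule R (AdicCompletion (Ideal.span {f}) N))) f := by
  set I : Ideal R := Ideal.span {f} with hI
  -- reformulated hypothesis: g • x ∈ fN → x ∈ fN
  have hg' : ∀ x : N, g • x ∈ (I • ⊤ : Submodule R N) → x ∈ (I • ⊤ : Submodule R N) := by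
    intro x hx
    have h0 : g • (Submodule.Quotient.mk x : N ⧸ (I • ⊤ : Submodule R N)) = g • 0 := by
      rw [smul_zero, ← Submodule.Quotient.mk_smul, Submodule.Quotient.mk_eq_zero]
      exact hx
    have := hg h0
    rwa [Submodule.Quotient.mk_eq_zero] at this
  -- g is regular mod f^n for all n
  have reg_pow : ∀ (n : ℕ) (x : N),
      g • x ∈ (I ^ n • ⊤ : Submodule R N) → x ∈ (I ^ n • ⊤ : Submodule R N) := by
    intro n
    induction n with
    | zero => intro x _; simp
    | succ n ih =>
      intro x hx
      have hx1 : g • x ∈ (I • ⊤ : Submodule R N) :=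
        Submodule.smul_mono (Ideal.pow_le_self (Nat.succ_ne_zero n)) le_rfl hx
      obtain ⟨x', rfl⟩ := (memI_aux f x).mp (hg' x hx1)
      obtain ⟨w, hw⟩ := (memP_aux f (n + 1) _).mp hx
      have hfe : f • (f ^ n • w) = f • (g • x') := by
        rw [← mul_smul, ← pow_succ', hw, smul_comm]
      have h2 : g • x' = f ^ n • w := (hf hfe).symm
      obtain ⟨w', hw'⟩ := (memP_aux f n x').mp (ih x' ((memP_aux f n _).mpr ⟨w, h2.symm⟩))
      exact (memP_aux f (n + 1) _).mpr ⟨w', by rw [← hw', pow_succ', mul_smul]⟩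
  -- exchange lemma: f • a = g • b → ∃ c, g • c = a ∧ f • c = b
  have exch : ∀ a b : N, f • a = g • b → ∃ c, g • c = a ∧ f • c = b := by
    intro a b hab
    have hb : b ∈ (I • ⊤ : Submodule R N) := hg' b ((memI_aux f _).mpr ⟨a, hab⟩)
    obtain ⟨c, rfl⟩ := (memI_aux f b).mp hb
    have h5 : f • (g • c) = f • a := by rw [smul_comm, ← hab]
    exact ⟨c, hf h5, rfl⟩
  -- g is regular on each N ⧸ I^n N
  have qreg : ∀ n : ℕ, IsSMulRegular (N ⧸ (I ^ n • ⊤ : Submodule R N)) g := by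
    intro n a b hab
    obtain ⟨a, rfl⟩ := Submodule.Quotient.mk_surjective _ a
    obtain ⟨b, rfl⟩ := Submodule.Quotient.mk_surjective _ b
    replace hab : g • (Submodule.Quotient.mk a : N ⧸ (I ^ n • ⊤ : Submodule R N)) =
        g • Submodule.Quotient.mk b := hab
    rw [← Submodule.Quotient.mk_smul, ← Submodule.Quotient.mk_smul,
      Submodule.Quotient.eq] at hab
    rw [Submodule.Quotient.eq]
    exact reg_pow n _ (by rwa [← smul_sub] at hab)
  -- first goal
  have goal1 : IsSMulRegular (AdicCompletion I N) g := by
    intro x y hxy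
    ext n
    refine qreg n ?_
    show g • x.val n = g • y.val n
    change (g • x).val n = (g • y).val n
    exact congrArg (fun t : AdicCompletion I N => t.val n) hxy
  refine ⟨goal1, ?_⟩
  -- key claim: if f • x = g • y in the completion, then x is divisible by g
  have hkey : ∀ x y : AdicCompletion I N, f • x = g • y → ∃ z, g • z = x := by
    intro x y hxy
    -- choose lifts of the components at level n+1
    have hXc : ∀ n : ℕ, ∃ X : N, (Submodule.Quotient.mk X :
        N ⧸ (I ^ (n + 1) • ⊤ : Submodule R N)) = x.val (n + 1) :=
      fun n => Submodule.Quotient.mk_surjective _ _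
    have hYc : ∀ n : ℕ, ∃ Y : N, (Submodule.Quotient.mk Y :
        N ⧸ (I ^ (n + 1) • ⊤ : Submodule R N)) = y.val (n + 1) :=
      fun n => Submodule.Quotient.mk_surjective _ _
    choose X hX using hXc
    choose Y hY using hYc
    -- construct B n with g • B n ≡ X n mod I^n
    have hBc : ∀ n : ℕ, ∃ B : N, (Submodule.Quotient.mk (g • B) :
        N ⧸ (I ^ n • ⊤ : Submodule R N)) = x.val n := by
      intro n
      have hmem : f • X n - g • Y n ∈ (I ^ (n + 1) • ⊤ : Submodule R N) := by
        rw [← Submodule.Quotient.mk_eq_zero, Submodule.Quotient.mk_sub,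
          Submodule.Quotient.mk_smul, Submodule.Quotient.mk_smul, hX, hY]
        change (f • x).val (n + 1) - (g • y).val (n + 1) = 0
        rw [hxy, sub_self]
      obtain ⟨W, hW⟩ := (memP_aux f (n + 1) _).mp hmem
      have hfe : f • (X n - f ^ n • W) = g • Y n := by
        rw [smul_sub, ← mul_smul, ← pow_succ', hW]
        abel
      obtain ⟨B, hB, -⟩ := exch _ _ hfe
      refine ⟨B, ?_⟩
      rw [hB]
      have h1 : (Submodule.Quotient.mk (X n - f ^ n • W) :
          N ⧸ (I ^ n • ⊤ : Submodule R N)) = Submodule.Quotient.mk (X n) := by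
        rw [Submodule.Quotient.eq]
        simpa using (memP_aux f n (X n - f ^ n • W - (X n - 0))).mpr
          ⟨-W, by simp [smul_neg]⟩
      rw [h1]
      have h2 := x.property (Nat.le_succ n)
      rw [← h2, ← hX n, transitionMap_mk_aux]
    choose B hB using hBc
    -- compatibility of the B n
    have hcompat : ∀ {m n : ℕ} (hmn : m ≤ n),
        AdicCompletion.transitionMap I N hmn
          ((fun n => (Submodule.Quotient.mk (B n) : N ⧸ (I ^ n • ⊤ : Submodule R N))) n)
          = Submodule.Quotient.mk (B m) := by
      intro m n hmn
      simp only [transitionMap_mk_aux]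
      rw [Submodule.Quotient.eq]
      refine reg_pow m _ ?_
      rw [smul_sub, ← Submodule.Quotient.mk_eq_zero (I ^ m • ⊤ : Submodule R N),
        Submodule.Quotient.mk_sub]
      have h3 : (Submodule.Quotient.mk (g • B n) : N ⧸ (I ^ m • ⊤ : Submodule R N))
          = x.val m := by
        have := congrArg (AdicCompletion.transitionMap I N hmn) (hB n)
        rw [transitionMap_mk_aux] at this
        rw [this]
        exact x.property hmn
      rw [h3, hB m, sub_self]
    refine ⟨⟨fun n => Submodule.Quotient.mk (B n), hcompat⟩, ?_⟩
    ext n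
    show g • (Submodule.Quotient.mk (B n) : N ⧸ (I ^ n • ⊤ : Submodule R N)) = x.val n
    rw [← Submodule.Quotient.mk_smul, hB]
  -- second goal
  intro p q hpq
  obtain ⟨x, rfl⟩ := Submodule.Quotient.mk_surjective _ p
  obtain ⟨y, rfl⟩ := Submodule.Quotient.mk_surjective _ q
  replace hpq : f • (Submodule.Quotient.mk x :
      (AdicCompletion I N) ⧸ (Ideal.span {g} • ⊤ :
        Submodule R (AdicCompletion I N))) = f • Submodule.Quotient.mk y := hpq
  rw [← Submodule.Quotient.mk_smul, ← Submodule.Quotient.mk_smul, Submodule.Quotient.eq] at hpq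
  rw [Submodule.Quotient.eq]
  rw [← smul_sub] at hpq
  rw [Submodule.ideal_span_singleton_smul] at hpq ⊢
  obtain ⟨w, -, hw⟩ := Set.mem_smul_set.mp hpq
  obtain ⟨z, hz⟩ := hkey (x - y) w hw.symm
  exact Set.mem_smul_set.mpr ⟨z, mem_top, hz⟩
end

section
/- Let R be a commutative ring, f, g ∈ R, and N an R-module which is f-adically complete. If f is a nonzerodivisor on N/gN, then N/gN is f-adically complete. -/
private lemma mem_pow_smul_top {R : Type*} [CommRing R] (f : R) {M : Type*} [AddCommGroup M]
    [Module R M] {x : M} {n : ℕ} :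
    x ∈ ((Ideal.span {f}) ^ n • ⊤ : Submodule R M) ↔ ∃ y : M, f ^ n • y = x := by
  rw [Ideal.span_singleton_pow, Submodule.ideal_span_singleton_smul, ← SetLike.mem_coe,
    Submodule.coe_pointwise_smul, Set.mem_smul_set]
  simp

private lemma mem_span_smul_top {R : Type*} [CommRing R] (g : R) {M : Type*} [AddCommGroup M]
    [Module R M] {x : M} :
    x ∈ ((Ideal.span {g}) • ⊤ : Submodule R M) ↔ ∃ y : M, g • y = x := by
  rw [Submodule.ideal_span_singleton_smul, ← SetLike.mem_coe,
    Submodule.coe_pointwise_smul, Set.mem_smul_set]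
  simp

private lemma chain_cauchy {R : Type*} [CommRing R] {I : Ideal R} {M : Type*} [AddCommGroup M]
    [Module R M] (z : ℕ → M) (hz : ∀ n, z (n + 1) - z n ∈ (I ^ n • ⊤ : Submodule R M)) :
    ∀ {m n}, m ≤ n → z m ≡ z n [SMOD (I ^ m • ⊤ : Submodule R M)] := by
  intro m n hmn
  induction n with
  | zero =>
    obtain rfl : m = 0 := Nat.le_zero.mp hmn
    exact SModEq.rfl
  | succ k ih =>
    rcases Nat.lt_or_ge m (k + 1) with hm | hm
    · have hm' : m ≤ k := Nat.lt_succ_iff.mp hm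
      refine (ih hm').trans ?_
      refine SModEq.mono (Submodule.smul_mono_left (Ideal.pow_le_pow_right hm')) ?_
      exact (SModEq.sub_mem.mpr (by simpa using hz k)).symm
    · obtain rfl : m = k + 1 := le_antisymm hmn hm
      exact SModEq.rfl

/-- Let `R` be a commutative ring, `f, g ∈ R`, and `N` an `R`-module which is
`f`-adically complete.  If `f` is a nonzerodivisor on `N/gN`, then `N/gN` is `f`-adically
complete. -/
theorem stmt_1 {R : Type*} [CommRing R] (f g : R) {N : Type*} [AddCommGroup N] [Module R N]
    [IsAdicComplete (Ideal.span {f}) N]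
    (h : IsSMulRegular (N ⧸ (Ideal.span {g} • ⊤ : Submodule R N)) f) :
    IsAdicComplete (Ideal.span {f}) (N ⧸ (Ideal.span {g} • ⊤ : Submodule R N)) := by
  set G : Submodule R N := (Ideal.span {g} • ⊤ : Submodule R N) with hG
  set Q := N ⧸ G
  have hcompl : IsAdicComplete (Ideal.span {f}) N := inferInstance
  refine { haus' := ?_, prec' := ?_ }
  · -- Hausdorff
    intro x hx
    replace hx : ∀ n, x ∈ ((Ideal.span {f}) ^ n • ⊤ : Submodule R Q) :=
      fun n => SModEq.zero.mp (hx n)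
    -- key division step
    have key : ∀ q : Q, (∀ n, q ∈ ((Ideal.span {f}) ^ n • ⊤ : Submodule R Q)) →
        ∃ u : Q, (∀ n, u ∈ ((Ideal.span {f}) ^ n • ⊤ : Submodule R Q)) ∧ f • u = q := by
      intro q hq
      obtain ⟨u, hu⟩ := (mem_pow_smul_top f).mp (hq 1)
      rw [pow_one] at hu
      refine ⟨u, fun n => ?_, hu⟩
      obtain ⟨w, hw⟩ := (mem_pow_smul_top f).mp (hq (n + 1))
      have hfw : f • (f ^ n • w) = f • u := by
        rw [hu, ← hw, ← mul_smul, ← pow_succ']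
      exact (mem_pow_smul_top f).mpr ⟨w, h hfw⟩
    -- iterate division
    let X : ℕ → {q : Q // ∀ n, q ∈ ((Ideal.span {f}) ^ n • ⊤ : Submodule R Q)} :=
      fun n => Nat.rec ⟨x, hx⟩
        (fun _ p => ⟨(key p.1 p.2).choose, (key p.1 p.2).choose_spec.1⟩) n
    have hX : ∀ n, f • (X (n + 1)).1 = (X n).1 :=
      fun n => (key (X n).1 (X n).2).choose_spec.2
    -- lift to N
    have hv' := fun n => Submodule.Quotient.mk_surjective G (X n).1
    choose v hv using hv'
    have hc' : ∀ n, ∃ c : N, g • c = v n - f • v (n + 1) := by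
      intro n
      rw [← mem_span_smul_top, ← hG, ← Submodule.Quotient.mk_eq_zero G]
      have : Submodule.Quotient.mk (p := G) (v n - f • v (n + 1))
          = (X n).1 - f • (X (n + 1)).1 := by
        rw [Submodule.Quotient.mk_sub, Submodule.Quotient.mk_smul, hv, hv]
      rw [this, hX, sub_self]
    choose c hc using hc'
    set s : ℕ → N := fun n => ∑ i ∈ Finset.range n, f ^ i • c i with hs
    have hvs : ∀ n, v 0 - g • s n = f ^ n • v n := by
      intro n
      induction n with
      | zero => simp [hs]
      | succ k ih =>
        have : s (k + 1) = s k + f ^ k • c k := by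
          rw [hs]; exact Finset.sum_range_succ _ _
        rw [this, smul_add, ← sub_sub, ih, smul_comm g (f ^ k) (c k), ← smul_sub, hc,
          sub_sub_cancel, ← mul_smul, ← pow_succ]
    have hscauchy : ∀ {m n : ℕ}, m ≤ n →
        s m ≡ s n [SMOD ((Ideal.span {f}) ^ m • ⊤ : Submodule R N)] := by
      apply chain_cauchy
      intro n
      refine (mem_pow_smul_top f).mpr ⟨c n, ?_⟩
      rw [hs]
      simp [Finset.sum_range_succ]
    obtain ⟨L, hL⟩ := hcompl.toIsPrecomplete.prec hscauchy
    have hzero : v 0 - g • L = 0 := by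
      refine hcompl.toIsHausdorff.haus _ (fun n => SModEq.zero.mpr ?_)
      have h1 : v 0 - g • L = (v 0 - g • s n) + g • (s n - L) := by rw [smul_sub]; abel
      rw [h1]
      refine Submodule.add_mem _ ?_ (Submodule.smul_mem _ g (SModEq.sub_mem.mp (hL n)))
      rw [hvs n]
      exact (mem_pow_smul_top f).mpr ⟨v n, rfl⟩
    have hx0 : x = (X 0).1 := rfl
    rw [hx0, ← hv 0]
    rw [Submodule.Quotient.mk_eq_zero]
    rw [sub_eq_zero] at hzero
    rw [hzero]
    exact (mem_span_smul_top g).mpr ⟨L, rfl⟩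
  · -- Precomplete
    intro u hu
    choose y hy using fun n => Submodule.Quotient.mk_surjective G (u n)
    have hstep : ∀ n, ∃ b : N, ∃ d ∈ G, y (n + 1) - y n = f ^ n • b + d := by
      intro n
      have := SModEq.sub_mem.mp ((hu (Nat.le_succ n)).symm)
      obtain ⟨a, ha⟩ := (mem_pow_smul_top f).mp this
      obtain ⟨b, hb⟩ := Submodule.Quotient.mk_surjective G a
      refine ⟨b, y (n + 1) - y n - f ^ n • b, ?_, by abel⟩
      rw [← Submodule.Quotient.mk_eq_zero G, Submodule.Quotient.mk_sub,
        Submodule.Quotient.mk_sub, Submodule.Quotient.mk_smul, hb, hy, hy, ha, sub_self]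
    choose b d hd hbd using hstep
    set z : ℕ → N := fun n => y n - ∑ i ∈ Finset.range n, d i with hz
    have hzc : ∀ {m n : ℕ}, m ≤ n →
        z m ≡ z n [SMOD ((Ideal.span {f}) ^ m • ⊤ : Submodule R N)] := by
      apply chain_cauchy
      intro n
      have : z (n + 1) - z n = f ^ n • b n := by
        rw [hz]
        simp only [Finset.sum_range_succ]
        rw [show y (n + 1) - (∑ i ∈ Finset.range n, d i + d n)
            - (y n - ∑ i ∈ Finset.range n, d i) = y (n + 1) - y n - d n by abel, hbd]
        abel
      rw [this]
      exact (mem_pow_smul_top f).mpr ⟨b n, rfl⟩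
    obtain ⟨L, hL⟩ := hcompl.toIsPrecomplete.prec hzc
    refine ⟨Submodule.Quotient.mk L, fun n => SModEq.sub_mem.mpr ?_⟩
    have hmkz : Submodule.Quotient.mk (p := G) (z n) = u n := by
      rw [hz, Submodule.Quotient.mk_sub, hy,
        (Submodule.Quotient.mk_eq_zero G).mpr (Submodule.sum_mem G (fun i _ => hd i)), sub_zero]
    obtain ⟨w, hw⟩ := (mem_pow_smul_top f).mp (SModEq.sub_mem.mp (hL n))
    refine (mem_pow_smul_top f).mpr ⟨Submodule.Quotient.mk w, ?_⟩
    rw [← Submodule.Quotient.mk_smul, hw, Submodule.Quotient.mk_sub, hmkz]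
end

section
/- Let V be a discrete valuation ring with uniformizer v, let a < b be coprime positive integers, and let W be a normal domain that is a finite extension of V containing an element whose b-th power is v (e.g., any finite extension of V[v^{1/b}]). Then the V-module map V → W sending 1 ↦ v^{a/b} splits as a map of V-modules. -/
/-- Let `V` be a DVR with uniformizer `v`, let `a < b` be coprime positive
integers, and let `W` be a normal (= integrally closed) domain which is a finite extension of
`V` containing an element `w` whose `b`-th power is `v`.  Then the `V`-module map `V → W`
sending `1 ↦ v^{a/b} = w^a` splits as a map of `V`-modules, i.e. there is a `V`-linear
`φ : W → V` with `φ (w ^ a) = 1`. -/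
theorem stmt_7 (V : Type*) [CommRing V] [IsDomain V] [IsDiscreteValuationRing V]
    (v : V) (hv : Irreducible v)
    (a b : ℕ) (ha : 0 < a) (hab : a < b) (hcop : Nat.Coprime a b)
    (W : Type*) [CommRing W] [IsDomain W] [IsIntegrallyClosed W]
    [Algebra V W] [Module.Finite V W] (hinj : Function.Injective (algebraMap V W))
    (w : W) (hw : w ^ b = algebraMap V W v) :
    ∃ φ : W →ₗ[V] V, φ (w ^ a) = 1 := by
  haveI : FaithfulSMul V W := (faithfulSMul_iff_algebraMap_injective V W).mpr hinj
  haveI : Module.Free V W := Module.free_of_finite_type_torsion_free'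
  haveI : Algebra.IsIntegral V W := Algebra.IsIntegral.of_finite V W
  -- v is not a unit in W
  have hvu : ¬ IsUnit (algebraMap V W v) := by
    intro h
    have hm : v ∈ IsLocalRing.maximalIdeal V := by
      rw [(IsDiscreteValuationRing.irreducible_iff_uniformizer v).mp hv]
      exact Ideal.mem_span_singleton_self v
    obtain ⟨Q, _, hQp, hQc⟩ := Ideal.exists_ideal_over_prime_of_isIntegral
      (IsLocalRing.maximalIdeal V) (⊥ : Ideal W) (by
        intro x hx
        have hx0 : x = 0 := hinj (by rw [show algebraMap V W x = 0 from hx, map_zero])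
        simp [hx0])
    have hvQ : algebraMap V W v ∈ Q := by
      rw [← hQc] at hm; exact hm
    exact hQp.ne_top (Ideal.eq_top_of_isUnit_mem Q hvQ h)
  set B := Module.Free.chooseBasis V W with hB
  have key : ∃ i, IsUnit (B.repr (w ^ a) i) := by
    by_contra hcon
    push_neg at hcon
    have hdvd : ∀ i, v ∣ B.repr (w ^ a) i := by
      intro i
      have : B.repr (w ^ a) i ∈ IsLocalRing.maximalIdeal V :=
        (IsLocalRing.mem_maximalIdeal _).mpr (hcon i)
      rwa [(IsDiscreteValuationRing.irreducible_iff_uniformizer v).mp hv,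
        Ideal.mem_span_singleton] at this
    choose d hd using hdvd
    set x : W := ∑ i, d i • B i with hx
    have hwa : w ^ a = algebraMap V W v * x := by
      conv_lhs => rw [← B.sum_repr (w ^ a)]
      rw [hx, Finset.mul_sum]
      refine Finset.sum_congr rfl fun i _ => ?_
      rw [hd i, mul_smul, ← Algebra.smul_def, smul_smul]
    have hw0 : w ≠ 0 := by
      intro h0
      apply hv.ne_zero
      apply hinj
      rw [← hw, h0, zero_pow (by omega), map_zero]
    have hcanc : w ^ a * (w ^ (b - a) * x) = w ^ a * 1 := by
      rw [mul_one, ← mul_assoc, ← pow_add, Nat.add_sub_cancel' hab.le, hw, hwa]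
    have : w ^ (b - a) * x = 1 := by
      exact mul_left_cancel₀ (pow_ne_zero _ hw0) hcanc
    have hba : b - a = (b - a - 1) + 1 := by omega
    rw [hba, pow_succ', mul_assoc] at this
    exact hvu (by rw [← hw]; exact (IsUnit.of_mul_eq_one _ this).pow b)
  obtain ⟨i, hi⟩ := key
  obtain ⟨u, hu⟩ := hi
  refine ⟨(u⁻¹ : Vˣ) • B.coord i, ?_⟩
  simp [Module.Basis.coord_apply, ← hu, Units.smul_def]
end

section
/- Let V = ⊕_{i≥0} V_i be an N-graded algebra over a Noetherian domain A (a function algebra, i.e., a graded subalgebra of K[T] for K the fraction field of A with each V_i a finitely generated A-module). If some Veronese subalgebra V^{(j)} = ⊕_{j | i} V_i is a finitely generated A-algebra, then V itself is a finitely generated A-algebra. -/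
set_option synthInstance.maxHeartbeats 1000000 in
set_option maxHeartbeats 2000000 in
/-- Let `V = ⊕_{i ≥ 0} V_i` be a function algebra over a Noetherian domain
`A`, i.e. an `ℕ`-graded `A`-subalgebra of `K[T]` (where `K = Frac A`) whose graded pieces
`V_i ⊆ K` are finitely generated `A`-modules.  If some Veronese subalgebra
`V^{(j)} = ⊕_{j ∣ i} V_i` is a finitely generated `A`-algebra, then so is `V`.

Here gradedness of `V ⊆ K[T]` is expressed by saying that `V` contains all homogeneous
components of its elements, the graded piece `V_i ⊆ K` is `{c | c·T^i ∈ V}`, and the Veronese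
subalgebra is realized as the subalgebra generated by the elements of `V` supported in degrees
divisible by `j`. -/
theorem stmt_10 (A : Type*) [CommRing A] [IsDomain A] [IsNoetherianRing A]
    (K : Type*) [Field K] [Algebra A K] [IsFractionRing A K]
    (V : Subalgebra A (Polynomial K))
    (hgraded : ∀ f ∈ V, ∀ i : ℕ, Polynomial.monomial i (f.coeff i) ∈ V)
    (hfg : ∀ i : ℕ, ∃ s : Finset K, ∀ c : K,
      Polynomial.monomial i c ∈ V ↔ c ∈ Submodule.span A (s : Set K))
    (j : ℕ) (hj : 0 < j)
    (hVer : (Algebra.adjoin A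
      {f : Polynomial K | f ∈ V ∧ ∀ i : ℕ, ¬ j ∣ i → f.coeff i = 0}).FG) :
    V.FG := by
  classical
  -- the key multiplicativity of supports-in-a-residue-class
  have key : ∀ (a b : ℕ) (p q : Polynomial K),
      (∀ i, i % j ≠ a % j → p.coeff i = 0) → (∀ i, i % j ≠ b % j → q.coeff i = 0) →
      ∀ i, i % j ≠ (a + b) % j → (p * q).coeff i = 0 := by
    intro a b p q hp hq i hi
    rw [Polynomial.coeff_mul]
    apply Finset.sum_eq_zero
    intro x hx
    have hx' : x.1 + x.2 = i := Finset.HasAntidiagonal.mem_antidiagonal.mp hx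
    by_cases h1 : x.1 % j = a % j
    · by_cases h2 : x.2 % j = b % j
      · exact absurd (by rw [← hx', Nat.add_mod, h1, h2, ← Nat.add_mod]) hi
      · rw [hq _ h2, mul_zero]
    · rw [hp _ h1, zero_mul]
  -- the Veronese set is a subalgebra
  let S : Subalgebra A (Polynomial K) :=
  { carrier := {f | f ∈ V ∧ ∀ i : ℕ, ¬ j ∣ i → f.coeff i = 0}
    mul_mem' := by
      rintro p q ⟨hpV, hp⟩ ⟨hqV, hq⟩
      refine ⟨V.mul_mem hpV hqV, fun i hi => ?_⟩
      refine key 0 0 p q (fun i hi' => hp i ?_) (fun i hi' => hq i ?_) i ?_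
      · rw [Nat.zero_mod] at hi'
        exact fun hd => hi' (Nat.dvd_iff_mod_eq_zero.mp hd)
      · rw [Nat.zero_mod] at hi'
        exact fun hd => hi' (Nat.dvd_iff_mod_eq_zero.mp hd)
      · simpa using fun h => hi (Nat.dvd_of_mod_eq_zero h)
    one_mem' := ⟨V.one_mem, fun i hi => by
      rw [Polynomial.coeff_one]
      have : i ≠ 0 := fun h => hi (h ▸ dvd_zero j)
      simp [this]⟩
    add_mem' := by
      rintro p q ⟨hpV, hp⟩ ⟨hqV, hq⟩
      exact ⟨V.add_mem hpV hqV, fun i hi => by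
        rw [Polynomial.coeff_add, hp i hi, hq i hi, add_zero]⟩
    zero_mem' := ⟨V.zero_mem, fun i _ => Polynomial.coeff_zero i⟩
    algebraMap_mem' := by
      intro a
      refine ⟨V.algebraMap_mem a, fun i hi => ?_⟩
      have : i ≠ 0 := fun h => hi (h ▸ dvd_zero j)
      simp [Polynomial.algebraMap_apply, Polynomial.coeff_C, this] }
  have hadj : Algebra.adjoin A
      {f : Polynomial K | f ∈ V ∧ ∀ i : ℕ, ¬ j ∣ i → f.coeff i = 0} = S :=
    le_antisymm (Algebra.adjoin_le fun f hf => hf) (fun f hf => Algebra.subset_adjoin hf)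
  rw [hadj] at hVer
  haveI : Algebra.FiniteType A S := (Subalgebra.fg_iff_finiteType S).mp hVer
  haveI : IsNoetherianRing S := Algebra.FiniteType.isNoetherianRing A S
  have hSV : S ≤ V := fun f hf => hf.1
  -- scalar multiplication by elements of `S` on `K[T]` is just multiplication
  have smul_eq : ∀ (s : ↥S) (p : Polynomial K), s • p = (s : Polynomial K) * p := by
    intro s p
    rw [Algebra.smul_def]
    rfl
  -- residue of a power
  have keypow : ∀ (r n : ℕ) (g : Polynomial K),
      (∀ i, i % j ≠ r % j → g.coeff i = 0) →
      ∀ i, i % j ≠ (n * r) % j → (g ^ n).coeff i = 0 := by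
    intro r n g hg
    induction n with
    | zero =>
      intro i hi
      rw [Nat.zero_mul, Nat.zero_mod] at hi
      rw [pow_zero, Polynomial.coeff_one]
      have hi0 : i ≠ 0 := by
        intro h; subst h; exact hi (Nat.zero_mod j)
      simp [hi0]
    | succ n ih =>
      intro i hi
      rw [pow_succ]
      refine key (n * r) r _ g ih hg i ?_
      simpa [Nat.succ_mul] using hi
  -- the residue-class pieces of `V` as `S`-submodules of `K[T]`
  let M : ℕ → Submodule ↥S (Polynomial K) := fun r =>
  { carrier := {f | f ∈ V ∧ ∀ i : ℕ, i % j ≠ r % j → f.coeff i = 0}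
    add_mem' := by
      rintro p q ⟨hpV, hp⟩ ⟨hqV, hq⟩
      exact ⟨V.add_mem hpV hqV, fun i hi => by
        rw [Polynomial.coeff_add, hp i hi, hq i hi, add_zero]⟩
    zero_mem' := ⟨V.zero_mem, fun i _ => Polynomial.coeff_zero i⟩
    smul_mem' := by
      rintro s p ⟨hpV, hp⟩
      rw [Set.mem_setOf_eq, smul_eq]
      refine ⟨V.mul_mem (hSV s.2) hpV, fun i hi => ?_⟩
      refine key 0 r _ p (fun i hi' => s.2.2 i ?_) hp i (by simpa using hi)
      rw [Nat.zero_mod] at hi'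
      exact fun hd => hi' (Nat.dvd_iff_mod_eq_zero.mp hd) }
  have memM : ∀ (r : ℕ) (f : Polynomial K),
      f ∈ M r ↔ f ∈ V ∧ ∀ i : ℕ, i % j ≠ r % j → f.coeff i = 0 := fun r f => Iff.rfl
  -- `S` itself as an `S`-submodule of `K[T]`
  let SS : Submodule ↥S (Polynomial K) :=
  { carrier := (S : Set (Polynomial K))
    add_mem' := fun ha hb => S.add_mem ha hb
    zero_mem' := S.zero_mem
    smul_mem' := fun s p hp => by rw [smul_eq]; exact S.mul_mem s.2 hp }
  have memSS : ∀ f : Polynomial K, f ∈ SS ↔ f ∈ S := fun f => Iff.rfl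
  -- `SS` is a Noetherian `S`-module
  let e : ↥S ≃ₗ[↥S] ↥SS :=
  { toFun := fun s => ⟨s.1, s.2⟩
    invFun := fun x => ⟨x.1, x.2⟩
    left_inv := fun _ => rfl
    right_inv := fun _ => rfl
    map_add' := fun _ _ => rfl
    map_smul' := fun a b => by
      apply Subtype.ext
      show ((a * b : ↥S) : Polynomial K) = a • (b : Polynomial K)
      rw [smul_eq]; rfl }
  haveI : IsNoetherian ↥S ↥SS := isNoetherian_of_linearEquiv e
  -- each residue-class piece is a finitely generated `S`-module
  have Mfg : ∀ r : ℕ, (M r).FG := by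
    intro r
    by_cases hbot : M r = ⊥
    · rw [hbot]; exact Submodule.fg_bot
    · obtain ⟨g, hg, hg0⟩ := (Submodule.ne_bot_iff (M r)).mp hbot
      obtain ⟨hgV, hgres⟩ := (memM r g).mp hg
      set u : Polynomial K := g ^ (j - 1) with hu
      have hu0 : u ≠ 0 := pow_ne_zero _ hg0
      have huV : u ∈ V := V.pow_mem hgV _
      set φ : Polynomial K →ₗ[↥S] Polynomial K := LinearMap.mulRight ↥S u with hφ
      have hinj : Function.Injective φ := by
        intro x y hxy
        have : x * u = y * u := hxy
        exact mul_right_cancel₀ hu0 this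
      have himg : Submodule.map φ (M r) ≤ SS := by
        rintro _ ⟨m, hm, rfl⟩
        obtain ⟨hmV, hmres⟩ := (memM r m).mp hm
        show m * u ∈ S
        refine ⟨V.mul_mem hmV huV, fun i hi => ?_⟩
        refine key r ((j - 1) * r) m u hmres (keypow r (j - 1) g hgres) i ?_
        have hjr : r + (j - 1) * r = j * r := by
          obtain ⟨k, rfl⟩ : ∃ k, j = k + 1 := ⟨j - 1, (Nat.succ_pred_eq_of_pos hj).symm⟩
          simp [Nat.succ_mul, Nat.add_mul, Nat.add_comm]
        rw [hjr, Nat.mul_mod_right]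
        exact fun h => hi (Nat.dvd_of_mod_eq_zero h)
      have hNfg : (Submodule.map φ (M r)).FG := by
        have h1 : ((Submodule.map φ (M r)).comap SS.subtype).FG := IsNoetherian.noetherian _
        have h2 := h1.map SS.subtype
        rwa [Submodule.map_comap_subtype, inf_eq_right.mpr himg] at h2
      exact Submodule.fg_of_fg_map_injective φ hinj hNfg
  -- `V` is the (finite) sum of the residue-class pieces
  set T : Submodule ↥S (Polynomial K) := ⨆ r ∈ Finset.range j, M r with hT
  have hTfg : T.FG := Submodule.fg_biSup (Finset.range j) M (fun r _ => Mfg r)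
  have hVT : ∀ f ∈ V, f ∈ T := by
    intro f hf
    have hdecomp : f = ∑ r ∈ Finset.range j,
        ∑ i ∈ f.support.filter (fun i => i % j = r), Polynomial.monomial i (f.coeff i) := by
      rw [Finset.sum_fiberwise_of_maps_to (fun i _ => Finset.mem_range.mpr (Nat.mod_lt _ hj))]
      exact f.as_sum_support
    rw [hdecomp]
    refine Submodule.sum_mem _ fun r hr => ?_
    have hle : M r ≤ T := le_biSup M hr
    refine hle ((memM r _).mpr ⟨?_, ?_⟩)
    · exact sum_mem fun i _ => hgraded f hf i
    · intro i hi
      rw [Polynomial.finset_sum_coeff]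
      apply Finset.sum_eq_zero
      intro x hx
      obtain ⟨hx1, hx2⟩ := Finset.mem_filter.mp hx
      rw [Polynomial.coeff_monomial]
      have hxi : x ≠ i := by
        intro h; subst h
        exact hi (by rw [hx2, Nat.mod_eq_of_lt (Finset.mem_range.mp hr)])
      simp [hxi]
  -- hence `V` is a finitely generated `S`-module
  let VS : Submodule ↥S (Polynomial K) :=
  { carrier := (V : Set (Polynomial K))
    add_mem' := fun ha hb => V.add_mem ha hb
    zero_mem' := V.zero_mem
    smul_mem' := fun s p hp => by rw [smul_eq]; exact V.mul_mem (hSV s.2) hp }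
  have hVS : VS = T := by
    apply le_antisymm
    · exact fun f hf => hVT f hf
    · refine iSup_le fun r => iSup_le fun _ => fun f hf => ((memM r f).mp hf).1
  have hVSfg : VS.FG := hVS ▸ hTfg
  -- transfer finiteness along the tower `A ⊆ S ⊆ V`
  letI : Algebra ↥S ↥V := (Subalgebra.inclusion hSV).toAlgebra
  haveI : Module.Finite ↥S ↥VS := Module.Finite.iff_fg.mpr hVSfg
  let e2 : ↥VS ≃ₗ[↥S] ↥V :=
  { toFun := fun x => ⟨x.1, x.2⟩
    invFun := fun x => ⟨x.1, x.2⟩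
    left_inv := fun _ => rfl
    right_inv := fun _ => rfl
    map_add' := fun _ _ => rfl
    map_smul' := fun s x => by
      apply Subtype.ext
      show (↑(s • x) : Polynomial K) = ((Subalgebra.inclusion hSV s : ↥V) : Polynomial K) * x
      rw [Submodule.coe_smul, smul_eq]
      rfl }
  haveI : Module.Finite ↥S ↥V := Module.Finite.equiv e2
  haveI : IsScalarTower A ↥S ↥V := IsScalarTower.of_algebraMap_eq fun a => by
    apply Subtype.ext
    rfl
  haveI : Algebra.FiniteType ↥S ↥V := inferInstance
  have hft : Algebra.FiniteType A ↥V :=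
    Algebra.FiniteType.trans (inferInstance : Algebra.FiniteType A ↥S) ‹Algebra.FiniteType ↥S ↥V›
  exact (Subalgebra.fg_iff_finiteType V).mpr hft
end
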